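/- Let f : ℝ⁺ → ℝ⁺ be an increasing diverging function and let g₀ ∈ G be an f-divergent element for some non-elementary isometric action of G on a geodesic Gromov hyperbolic space X. Then g₀ is a loxodromic WPD element for this action on X. -/

import Mathlib

open MeasureTheory Filter
open scoped ENNReal

noncomputable section

namespace RandomDivergence

variable {G : Type*} [Group G]

/-- Word length of `g` with respect to the finite set `S` (inverses of generators allowed). -/
def wordLength (S : Finset G) (g : G) : ℕ :=
  sInf {n : ℕ | ∃ l : List G, l.length = n ∧ (∀ x ∈ l, x ∈ S ∨ x⁻¹ ∈ S) ∧ l.prod = g}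

/-- The word metric on `G` with respect to the finite generating set `S`. -/
def wdist (S : Finset G) (g h : G) : ℝ := (wordLength S (g⁻¹ * h) : ℝ)

/-- Distance from a point to a subset of `G` in the word metric. -/
def wdistSet (S : Finset G) (g : G) (A : Set G) : ℝ := sInf (wdist S g '' A)

/-- A discrete path in the Cayley graph of `(G,S)` from `a` to `b`: a nonempty sequence of
points starting at `a`, ending at `b`, with consecutive points at word distance at most 1. -/
structure IsPath (S : Finset G) (α : List G) (a b : G) : Prop where
  ne : α ≠ []
  head : α.head? = some a
  last : α.getLast? = some b
  chain : α.Chain' fun u v => wdist S u v ≤ 1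

/-- Length (number of steps) of a discrete path. -/
def pathLength (α : List G) : ℝ := (α.length : ℝ) - 1

/-- `div S a b c δ` is the infimum of lengths of discrete paths from `a` to `b` in the Cayley
graph of `(G,S)` avoiding the ball of radius `δ · d(c,{a,b})` around `c`; it is `∞` if no
such path exists. -/
def div (S : Finset G) (a b c : G) (δ : ℝ) : ℝ≥0∞ :=
  sInf {L : ℝ≥0∞ | ∃ α : List G, IsPath S α a b ∧
    (∀ p ∈ α, δ * min (wdist S c a) (wdist S c b) ≤ wdist S c p) ∧
    L = ENNReal.ofReal (pathLength α)}

/-- The Gromov product `(x , y)_z`. -/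
def gromov {X : Type*} [MetricSpace X] (z x y : X) : ℝ := (dist x z + dist y z - dist x y) / 2

/-- A Gromov hyperbolic metric space (four point condition). -/
def IsHypSpace (X : Type*) [MetricSpace X] : Prop :=
  ∃ δ : ℝ, 0 ≤ δ ∧ ∀ x y z w : X, min (gromov w x z) (gromov w z y) - δ ≤ gromov w x y

/-- `c` parametrises a geodesic segment from `x` to `y`. -/
def IsGeodesicSegment {X : Type*} [MetricSpace X] (c : ℝ → X) (x y : X) : Prop :=
  c 0 = x ∧ c (dist x y) = y ∧
    ∀ s ∈ Set.Icc (0:ℝ) (dist x y), ∀ t ∈ Set.Icc (0:ℝ) (dist x y),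
      dist (c s) (c t) = |s - t|

/-- A geodesic metric space. -/
def IsGeodesicSpace (X : Type*) [MetricSpace X] : Prop :=
  ∀ x y : X, ∃ c : ℝ → X, IsGeodesicSegment c x y

/-- The action of `G` on `X` is by isometries. -/
def IsIsometricAction (G : Type*) (X : Type*) [Group G] [MetricSpace X] [MulAction G X] :
    Prop :=
  ∀ (g : G) (x y : X), dist (g • x) (g • y) = dist x y

/-- `g` is loxodromic: `n ↦ gⁿ • x0` is a quasi-isometric embedding of `ℤ` into `X`. -/
def IsLoxodromic {X : Type*} [MetricSpace X] [MulAction G X] (g : G) (x0 : X) : Prop :=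
  ∃ a : ℝ, 0 < a ∧ ∃ b : ℝ, ∀ m n : ℤ,
    a⁻¹ * |(m : ℝ) - (n : ℝ)| - b ≤ dist (g ^ m • x0) (g ^ n • x0) ∧
      dist (g ^ m • x0) (g ^ n • x0) ≤ a * |(m : ℝ) - (n : ℝ)| + b

/-- A group is virtually cyclic if it has a cyclic subgroup of finite index. -/
def VirtuallyCyclic (G : Type*) [Group G] : Prop :=
  ∃ H : Subgroup G, H.FiniteIndex ∧ IsCyclic ↥H

/-- The action is non-elementary: unbounded orbits and `G` not virtually cyclic. -/
def NonElementaryAction (G : Type*) [Group G] {X : Type*} [MetricSpace X] [MulAction G X]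
    (x0 : X) : Prop :=
  (∀ R : ℝ, ∃ g : G, R < dist x0 (g • x0)) ∧ ¬ VirtuallyCyclic G

/-- The action of `G` on `X` is acylindrical. -/
def AcylindricalAction (G : Type*) (X : Type*) [Group G] [MetricSpace X] [MulAction G X] :
    Prop :=
  ∀ ε : ℝ, 0 < ε → ∃ (R : ℝ) (N : ℕ), 0 < R ∧
    ∀ x y : X, R ≤ dist x y →
      {g : G | dist x (g • x) ≤ ε ∧ dist y (g • y) ≤ ε}.encard ≤ (N : ℕ∞)

/-- `g` satisfies the weak proper discontinuity (WPD) condition. -/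
def IsWPD {X : Type*} [MetricSpace X] [MulAction G X] (g : G) : Prop :=
  ∀ κ : ℝ, 0 < κ → ∀ x : X, ∃ N : ℕ,
    {h : G | dist x (h • x) < κ ∧ dist (g ^ N • x) (h • g ^ N • x) < κ}.Finite

/-- An increasing diverging function `ℝ⁺ → ℝ⁺`. -/
structure DivergingFun (f : ℝ → ℝ) : Prop where
  mono : Monotone f
  tendsto_atTop : Tendsto f atTop atTop
  nonneg : ∀ x : ℝ, 0 ≤ x → 0 ≤ f x

/-- `π : G → ⟨g⟩` is an `X`-projection: `π h • x0` is a closest point of the orbit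
`⟨g⟩ • x0` to `h • x0`. -/
def IsXProj {X : Type*} [MetricSpace X] [MulAction G X] (x0 : X) (g : G) (π : G → G) : Prop :=
  ∀ h : G, π h ∈ Subgroup.zpowers g ∧
    ∀ z ∈ Subgroup.zpowers g, dist (π h • x0) (h • x0) ≤ dist (z • x0) (h • x0)

/-- The defining inequality of an `f`-divergent element `g`, with divergence constant `θ`
and `X`-projection `π`: any discrete path between points whose projections to `⟨g⟩` are at
word distance at least `θ`, staying outside the `d`-neighbourhood of `⟨g⟩`, has length at
least `f d`. -/
def FDivergentWith (S : Finset G) {X : Type*} [MetricSpace X] [MulAction G X] (x0 : X)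
    (f : ℝ → ℝ) (g : G) (θ : ℝ) (π : G → G) : Prop :=
  IsXProj x0 g π ∧
    ∀ x y : G, θ ≤ wdist S (π x) (π y) →
      ∀ d : ℝ, 0 < d → ∀ α : List G, IsPath S α x y →
        (∀ p ∈ α, ∀ z ∈ Subgroup.zpowers g, d ≤ wdist S p z) →
        f d ≤ pathLength α

/-- `g` is an `f`-divergent element (for the given action with basepoint `x0`). -/
def IsFDivergent (S : Finset G) {X : Type*} [MetricSpace X] [MulAction G X] (x0 : X)
    (f : ℝ → ℝ) (g : G) : Prop :=
  IsLoxodromic g x0 ∧ ∃ (θ : ℝ) (π : G → G), FDivergentWith S x0 f g θ π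

/-- `γ = E(g)` is the elementary closure of `g`: the unique maximal virtually cyclic
subgroup containing `g`. -/
def IsElementaryClosure (g : G) (γ : Subgroup G) : Prop :=
  g ∈ γ ∧ VirtuallyCyclic ↥γ ∧ ∀ γ' : Subgroup G, g ∈ γ' → VirtuallyCyclic ↥γ' → γ' ≤ γ

/-- The left coset of `γ` corresponding to `c : G ⧸ γ`, as a subset of `G`. -/
def cosetOf (γ : Subgroup G) (c : G ⧸ γ) : Set G :=
  {g : G | (QuotientGroup.mk g : G ⧸ γ) = c}

/-- Diameter in `X` of the image of a subset of `G` under the orbit map. -/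
def XDiam {X : Type*} [MetricSpace X] [MulAction G X] (x0 : X) (A : Set G) : ℝ :=
  sSup {r : ℝ | ∃ a ∈ A, ∃ b ∈ A, r = dist (a • x0) (b • x0)}

/-- A system of strong-Behrstock projections onto the cosets of `γ`: projections of
uniformly bounded diameter `B`, within Hausdorff distance `B` of closest-point projection
to the orbit of the coset, satisfying the strong Behrstock inequality. -/
structure ProjSystem (G : Type*) (X : Type*) [Group G] [MetricSpace X] [MulAction G X]
    (x0 : X) (γ : Subgroup G) where
  π : G ⧸ γ → G → Set G
  B : ℝ
  B_pos : 0 < B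
  mem_coset : ∀ (c : G ⧸ γ) (x : G), π c x ⊆ cosetOf γ c
  nonempty : ∀ (c : G ⧸ γ) (x : G), (π c x).Nonempty
  diam_le : ∀ (c : G ⧸ γ) (x : G), XDiam x0 (π c x) ≤ B
  closest : ∀ (c : G ⧸ γ) (p : G), ∃ q ∈ cosetOf γ c,
    (∀ r ∈ cosetOf γ c, dist (q • x0) (p • x0) ≤ dist (r • x0) (p • x0)) ∧
      ∀ a ∈ π c p, dist (a • x0) (q • x0) ≤ B
  behrstock : ∀ c c' : G ⧸ γ, c ≠ c' → ∀ x : G,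
    B < XDiam x0 (π c x ∪ ⋃ y ∈ cosetOf γ c', π c y) →
      π c' x = ⋃ y ∈ cosetOf γ c, π c' y

variable {X : Type*} [MetricSpace X] [MulAction G X] {x0 : X} {γ : Subgroup G}

/-- The projection distance `d_{hγ}(x,y) = diam (π_{hγ}(x) ∪ π_{hγ}(y))`. -/
def ProjSystem.dproj (P : ProjSystem G X x0 γ) (c : G ⧸ γ) (x y : G) : ℝ :=
  XDiam x0 (P.π c x ∪ P.π c y)

/-- `H_T(x,y)`: the set of cosets of `γ` on which `x` and `y` have projection
distance at least `T`. -/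
def ProjSystem.HT (P : ProjSystem G X x0 γ) (T : ℝ) (x y : G) : Set (G ⧸ γ) :=
  {c | T ≤ P.dproj c x y}

/-- `A^r_{x,y}`: cosets of `H_T(x,y)` whose projection of `x` lies in the ball `B(x,r)`. -/
def ProjSystem.ASet (P : ProjSystem G X x0 γ) (S : Finset G) (T r : ℝ) (x y : G) :
    Set (G ⧸ γ) :=
  P.HT T x y ∩ {c | ∀ a ∈ P.π c x, wdist S x a ≤ r}

/-- The projections are `L`-coarsely Lipschitz. -/
def ProjSystem.CoarseLip (P : ProjSystem G X x0 γ) (S : Finset G) (L : ℝ) : Prop :=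
  ∀ (c : G ⧸ γ) (x y : G), P.dproj c x y ≤ L * wdist S x y + L

section Probability

variable {Ω : Type*} [MeasureSpace Ω]

/-- `w` is the random walk on `G` driven by `μ`: the increments are i.i.d. of law `μ`. -/
def IsRandomWalk [MeasurableSpace G] (μ : Measure G) (w : ℕ → Ω → G) : Prop :=
  ∃ inc : ℕ → Ω → G, (∀ i, Measurable (inc i)) ∧
    ProbabilityTheory.iIndepFun inc (volume : Measure Ω) ∧
    (∀ i, Measure.map (inc i) (volume : Measure Ω) = μ) ∧
    ∀ (n : ℕ) (ω : Ω), w n ω = ((List.range n).map fun i => inc i ω).prod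

/-- `w` and `z` are two independent copies of the random walk driven by `μ`. -/
def AreIndepRandomWalks [MeasurableSpace G] (μ : Measure G) (w z : ℕ → Ω → G) : Prop :=
  ∃ inc : ℕ ⊕ ℕ → Ω → G, (∀ i, Measurable (inc i)) ∧
    ProbabilityTheory.iIndepFun inc (volume : Measure Ω) ∧
    (∀ i, Measure.map (inc i) (volume : Measure Ω) = μ) ∧
    (∀ (n : ℕ) (ω : Ω), w n ω = ((List.range n).map fun i => inc (Sum.inl i) ω).prod) ∧
    (∀ (n : ℕ) (ω : Ω), z n ω = ((List.range n).map fun i => inc (Sum.inr i) ω).prod)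

/-- `μ` has finite support generating `G` as a semigroup. -/
def FinSuppGen [MeasurableSpace G] (μ : Measure G) : Prop :=
  (Function.support fun g : G => μ {g}).Finite ∧
    Subsemigroup.closure {g : G | μ {g} ≠ 0} = ⊤

/-- `w : G → ℕ → Ω → G` is a (time-homogeneous) Markov chain on `G`: `w o` starts at `o`,
and conditionally on the past up to time `n` with current position `g`, the future has the
law of the chain started at `g`. -/
structure IsMarkovChain (w : G → ℕ → Ω → G) : Prop where
  start : ∀ (o : G) (ω : Ω), w o 0 ω = o
  markov : ∀ (o : G) (n : ℕ) (path : ℕ → G) (A : Set (ℕ → G)),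
    volume {ω : Ω | (∀ k ≤ n, w o k ω = path k) ∧ (fun j => w o (n + j) ω) ∈ A} =
      volume {ω : Ω | ∀ k ≤ n, w o k ω = path k} *
        volume {ω : Ω | (fun j => w (path n) j ω) ∈ A}

/-- Bounded jumps: there is a finite set `F` with `p(g,h) = 0` unless `h ∈ gF`. -/
def HasBddJumps (w : G → ℕ → Ω → G) : Prop :=
  ∃ F : Finset G, ∀ g h : G, g⁻¹ * h ∉ F → volume {ω : Ω | w g 1 ω = h} = 0

/-- Irreducibility of a Markov chain on `G`. -/
def IsIrreducibleChain (w : G → ℕ → Ω → G) : Prop :=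
  ∀ s : G, ∃ (ε : ℝ) (K : ℕ), 0 < ε ∧
    ∀ g : G, ∃ k ≤ K, ENNReal.ofReal ε ≤ volume {ω : Ω | w g k ω = g * s}

/-- `w` and `z` are independent and have the same law (independent copies). -/
def IndepSameLawChains (w z : G → ℕ → Ω → G) : Prop :=
  (∀ (p : G) (A : Set (ℕ → G)),
      volume {ω : Ω | (fun n => w p n ω) ∈ A} = volume {ω : Ω | (fun n => z p n ω) ∈ A}) ∧
    ∀ (p q : G) (A B : Set (ℕ → G)),
      volume {ω : Ω | (fun n => w p n ω) ∈ A ∧ (fun n => z q n ω) ∈ B} =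
        volume {ω : Ω | (fun n => w p n ω) ∈ A} * volume {ω : Ω | (fun n => z q n ω) ∈ B}

/-- The conclusion of [GS21, Proposition 5.1]: exponential tail for the total projection
distance undone by the chain on the cosets of `H_T(o,p)`. -/
def GSTailBound (P : ProjSystem G X x0 γ) (w : G → ℕ → Ω → G) (T C : ℝ) : Prop :=
  ∀ (o p : G) (n : ℕ) (t : ℝ), 0 < t →
    volume {ω : Ω | ∃ r ≤ n, t ≤ ∑' c : (P.HT T o p), P.dproj (c : G ⧸ γ) p (w p r ω)} ≤
      ENNReal.ofReal (C * Real.exp (-t / C))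

/-- Assumption MC: `w` is a Markov chain with bounded jumps, irreducible, satisfying the
conclusion of [GS21, Proposition 5.1] for all `T ≥ T₀'`. -/
structure AssumptionMC (P : ProjSystem G X x0 γ) (w : G → ℕ → Ω → G) (T₀' : ℝ) : Prop where
  chain : IsMarkovChain w
  bddJumps : HasBddJumps w
  irreducible : IsIrreducibleChain w
  tail : ∀ T : ℝ, T₀' ≤ T → ∃ C : ℝ, 0 < C ∧ GSTailBound P w T C

end Probability

/-!
If `h` moves both `x` and `g^N x` only a little, then the `X`-projections of `h` and `h g^N`
to `⟨g⟩` are far apart once `N` is large, because `g` is loxodromic and the orbit map is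
Lipschitz for the word metric. The path from `h` to `h g^N` spelling a fixed word for `g^N`
has length `L`, so by `f`-divergence it enters the `d`-neighbourhood of `⟨g⟩` for any `d`
with `L < f d`. Thus `h` is within `L + d` of some `g^k` with `g^k x₀` close to `x₀`, and
loxodromy leaves only finitely many such `k`.
-/

section WordMetric

variable {S : Finset G}

theorem exists_list_prod_eq (hS : Subgroup.closure (S : Set G) = ⊤) (g : G) :
    ∃ l : List G, (∀ x ∈ l, x ∈ S ∨ x⁻¹ ∈ S) ∧ l.prod = g := by
  have hg : g ∈ Submonoid.closure ((S : Set G) ∪ (S : Set G)⁻¹) := by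
    rw [← Subgroup.closure_toSubmonoid, hS]
    trivial
  obtain ⟨l, hl, hprod⟩ := Submonoid.exists_list_of_mem_closure hg
  exact ⟨l, fun x hx => by simpa using hl x hx, hprod⟩

theorem wordLength_prod_le {l : List G} (hl : ∀ x ∈ l, x ∈ S ∨ x⁻¹ ∈ S) :
    wordLength S l.prod ≤ l.length :=
  Nat.sInf_le ⟨l, rfl, hl, rfl⟩

theorem wordLength_le_one {t : G} (ht : t ∈ S ∨ t⁻¹ ∈ S) : wordLength S t ≤ 1 := by
  simpa using wordLength_prod_le (l := [t]) (by simpa using ht)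

theorem exists_list_length_eq_wordLength (hS : Subgroup.closure (S : Set G) = ⊤) (g : G) :
    ∃ l : List G, l.length = wordLength S g ∧ (∀ x ∈ l, x ∈ S ∨ x⁻¹ ∈ S) ∧ l.prod = g := by
  obtain ⟨l, hl, hprod⟩ := exists_list_prod_eq hS g
  exact Nat.sInf_mem (s := {n | ∃ l : List G, l.length = n ∧ (∀ x ∈ l, x ∈ S ∨ x⁻¹ ∈ S) ∧
    l.prod = g}) ⟨l.length, l, rfl, hl, hprod⟩

theorem wordLength_one : wordLength S (1 : G) = 0 := by
  simpa using wordLength_prod_le (S := S) (l := []) (by simp)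

theorem wordLength_mul_le (hS : Subgroup.closure (S : Set G) = ⊤) (g h : G) :
    wordLength S (g * h) ≤ wordLength S g + wordLength S h := by
  obtain ⟨lg, hlen_g, hlg, rfl⟩ := exists_list_length_eq_wordLength hS g
  obtain ⟨lh, hlen_h, hlh, rfl⟩ := exists_list_length_eq_wordLength hS h
  have hl : ∀ x ∈ lg ++ lh, x ∈ S ∨ x⁻¹ ∈ S := by
    simpa only [List.mem_append, or_imp, forall_and] using And.intro hlg hlh
  simpa [hlen_g, hlen_h] using wordLength_prod_le hl

theorem wordLength_inv_le (hS : Subgroup.closure (S : Set G) = ⊤) (g : G) :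
    wordLength S g⁻¹ ≤ wordLength S g := by
  obtain ⟨l, hlen, hl, rfl⟩ := exists_list_length_eq_wordLength hS g
  have hl' : ∀ x ∈ (l.map fun y => y⁻¹).reverse, x ∈ S ∨ x⁻¹ ∈ S := by
    simp only [List.mem_reverse, List.mem_map, forall_exists_index, and_imp,
      forall_apply_eq_imp_iff₂, inv_inv]
    exact fun y hy => (hl y hy).symm
  simpa [← List.prod_inv_reverse, hlen] using wordLength_prod_le hl'

theorem finite_setOf_wordLength_le (hS : Subgroup.closure (S : Set G) = ⊤) (n : ℕ) :
    {g : G | wordLength S g ≤ n}.Finite := by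
  let T : Set G := {x | x ∈ S ∨ x⁻¹ ∈ S}
  have : Finite T :=
    S.finite_toSet.union (S.finite_toSet.preimage inv_injective.injOn)
  refine ((List.finite_length_le T n).image fun l => (l.map Subtype.val).prod).subset ?_
  intro g hg
  obtain ⟨l, hlen, hl, rfl⟩ := exists_list_length_eq_wordLength hS g
  exact ⟨l.pmap Subtype.mk hl, by simpa [hlen] using hg, by simp [List.map_pmap]⟩

theorem wdist_comm (hS : Subgroup.closure (S : Set G) = ⊤) (g h : G) :
    wdist S g h = wdist S h g := by
  have key : ∀ a b : G, wdist S a b ≤ wdist S b a := fun a b => by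
    simpa [wdist] using wordLength_inv_le hS (b⁻¹ * a)
  exact (key g h).antisymm (key h g)

theorem wdist_triangle (hS : Subgroup.closure (S : Set G) = ⊤) (g h k : G) :
    wdist S g k ≤ wdist S g h + wdist S h k := by
  have := wordLength_mul_le hS (g⁻¹ * h) (h⁻¹ * k)
  rw [show g⁻¹ * h * (h⁻¹ * k) = g⁻¹ * k by group] at this
  simpa only [wdist] using (Nat.cast_le.mpr this).trans_eq (Nat.cast_add _ _)

theorem exists_isPath_mul_prod (hS : Subgroup.closure (S : Set G) = ⊤) (l : List G)
    (hl : ∀ x ∈ l, x ∈ S ∨ x⁻¹ ∈ S) (h : G) :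
    ∃ α : List G, IsPath S α h (h * l.prod) ∧ pathLength α = l.length ∧
      ∀ p ∈ α, wdist S h p ≤ l.length := by
  induction l generalizing h with
  | nil =>
    refine ⟨[h], ⟨by simp, by simp, by simp, List.isChain_singleton _⟩, by simp [pathLength], ?_⟩
    simp [wdist, wordLength_one]
  | cons t l ih =>
    obtain ⟨α, hα, hlen, hball⟩ := ih (fun x hx => hl x (List.mem_cons_of_mem _ hx)) (h * t)
    have hstep : wdist S h (h * t) ≤ 1 := by
      simpa [wdist] using wordLength_le_one (hl t List.mem_cons_self)
    obtain ⟨b, β, rfl⟩ := List.exists_cons_of_ne_nil hα.ne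
    obtain rfl : b = h * t := by simpa using hα.head
    refine ⟨h :: h * t :: β, ⟨by simp, by simp, ?_, ?_⟩, ?_, ?_⟩
    · simpa [mul_assoc] using hα.last
    · exact List.isChain_cons_cons.mpr ⟨hstep, hα.chain⟩
    · simp only [pathLength, List.length_cons] at hlen ⊢
      push_cast at hlen ⊢
      linarith
    · intro p hp
      rcases List.mem_cons.mp hp with rfl | hp
      · simp only [wdist, inv_mul_cancel, wordLength_one, CharP.cast_eq_zero, List.length_cons,
          Nat.cast_add, Nat.cast_one]
        positivity
      · have := wdist_triangle hS h (h * t) p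
        have := hball p hp
        simp only [List.length_cons]
        push_cast
        linarith

end WordMetric

theorem IsIsometricAction.dist_smul_smul (hiso : IsIsometricAction G X) (u v : G) (x : X) :
    dist (u • x) (v • x) = dist x ((u⁻¹ * v) • x) := by
  rw [← hiso u⁻¹, inv_smul_smul, mul_smul]

theorem IsIsometricAction.dist_smul_le (hiso : IsIsometricAction G X) (h : G) (x y : X) :
    dist y (h • y) ≤ dist x (h • x) + 2 * dist x y := by
  have := dist_triangle4 y x (h • x) (h • y)
  rw [hiso, dist_comm y x] at this
  linarith

theorem IsIsometricAction.exists_dist_smul_le_mul_wdist (hiso : IsIsometricAction G X)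
    {S : Finset G} (hS : Subgroup.closure (S : Set G) = ⊤) (x0 : X) :
    ∃ M : ℝ, 0 < M ∧ ∀ u v : G, dist (u • x0) (v • x0) ≤ M * wdist S u v := by
  set M : ℝ := 1 + ∑ s ∈ S, dist x0 (s • x0)
  have hM : 0 < M := by positivity
  have hgen : ∀ t : G, t ∈ S ∨ t⁻¹ ∈ S → dist x0 (t • x0) ≤ M := by
    have hS_le : ∀ s ∈ S, dist x0 (s • x0) ≤ M := fun s hs => by
      have := Finset.single_le_sum (f := fun s => dist x0 (s • x0)) (fun _ _ => dist_nonneg) hs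
      linarith
    rintro t (ht | ht)
    · exact hS_le t ht
    · have := hiso t⁻¹ x0 (t • x0)
      rw [inv_smul_smul] at this
      rw [← this, dist_comm]
      exact hS_le t⁻¹ ht
  have hword : ∀ l : List G, (∀ t ∈ l, t ∈ S ∨ t⁻¹ ∈ S) →
      dist x0 (l.prod • x0) ≤ M * l.length := by
    intro l hl
    induction l with
    | nil => simp
    | cons t l ih =>
      have ht := hgen t (hl t List.mem_cons_self)
      have hl' := ih fun x hx => hl x (List.mem_cons_of_mem _ hx)
      calc dist x0 ((t :: l).prod • x0)
          ≤ dist x0 (t • x0) + dist (t • x0) ((t * l.prod) • x0) := dist_triangle _ _ _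
        _ = dist x0 (t • x0) + dist x0 (l.prod • x0) := by rw [mul_smul, hiso]
        _ ≤ M * (t :: l).length := by
          simp only [List.length_cons]
          push_cast
          linarith
  refine ⟨M, hM, fun u v => ?_⟩
  obtain ⟨l, hlen, hl, hprod⟩ := exists_list_length_eq_wordLength hS (u⁻¹ * v)
  rw [hiso.dist_smul_smul, wdist, ← hlen, ← hprod]
  exact hword l hl

theorem IsXProj.dist_le_two_mul {g : G} {π : G → G} (hπ : IsXProj x0 g π) {z : G}
    (hz : z ∈ Subgroup.zpowers g) (h : G) :
    dist (z • x0) (π h • x0) ≤ 2 * dist (z • x0) (h • x0) := by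
  have := (hπ h).2 z hz
  have := dist_triangle (z • x0) (h • x0) (π h • x0)
  rw [dist_comm (h • x0)] at this
  linarith

section Loxodromic

variable {g : G}

theorem IsLoxodromic.exists_pow_dist_ge (hg : IsLoxodromic g x0) (C : ℝ) :
    ∃ N : ℕ, C ≤ dist x0 (g ^ N • x0) := by
  obtain ⟨a, ha, b, hab⟩ := hg
  obtain ⟨N, hN⟩ := exists_nat_ge (a * (C + b))
  refine ⟨N, ?_⟩
  have hlow := (hab 0 N).1
  simp only [zpow_zero, one_smul, zpow_natCast, Int.cast_zero, Int.cast_natCast, zero_sub,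
    abs_neg, Nat.abs_cast] at hlow
  have : C + b ≤ a⁻¹ * N := by
    rw [inv_mul_eq_div, le_div_iff₀ ha]
    linarith
  linarith

theorem IsLoxodromic.finite_setOf_dist_zpow_le (hg : IsLoxodromic g x0) (R : ℝ) :
    {k : ℤ | dist x0 (g ^ k • x0) ≤ R}.Finite := by
  obtain ⟨a, ha, b, hab⟩ := hg
  refine (Set.finite_Icc (-⌈a * (R + b)⌉) ⌈a * (R + b)⌉).subset fun k hk => ?_
  have hlow := (hab 0 k).1
  simp only [zpow_zero, one_smul, Int.cast_zero, zero_sub, abs_neg] at hlow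
  have hk' : |(k : ℝ)| ≤ a * (R + b) := by
    rw [← inv_mul_le_iff₀ ha]
    linarith [hk.out]
  obtain ⟨hlo, hhi⟩ := abs_le.mp (hk'.trans (Int.le_ceil _))
  exact ⟨by exact_mod_cast hlo, by exact_mod_cast hhi⟩

theorem IsLoxodromic.finite_setOf_wdist_zpow_le (hg : IsLoxodromic g x0) {S : Finset G}
    (hS : Subgroup.closure (S : Set G) = ⊤) (R D : ℝ) :
    {h : G | ∃ k : ℤ, dist x0 (g ^ k • x0) ≤ R ∧ wdist S (g ^ k) h ≤ D}.Finite := by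
  refine ((hg.finite_setOf_dist_zpow_le R).biUnion fun k _ =>
    (finite_setOf_wordLength_le hS ⌊D⌋₊).image (g ^ k * ·)).subset ?_
  rintro h ⟨k, hk, hkh⟩
  exact Set.mem_biUnion hk ⟨(g ^ k)⁻¹ * h, Nat.le_floor hkh, mul_inv_cancel_left _ _⟩

end Loxodromic

theorem FDivergentWith.exists_wdist_zpowers_lt {S : Finset G}
    (hS : Subgroup.closure (S : Set G) = ⊤) {f : ℝ → ℝ} {g : G} {θ : ℝ} {π : G → G}
    (hdiv : FDivergentWith S x0 f g θ π) {l : List G} (hl : ∀ x ∈ l, x ∈ S ∨ x⁻¹ ∈ S) {h : G}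
    (hθ : θ ≤ wdist S (π h) (π (h * l.prod))) {d : ℝ} (hd : 0 < d) (hfd : l.length < f d) :
    ∃ z ∈ Subgroup.zpowers g, wdist S h z < l.length + d := by
  obtain ⟨α, hα, hlen, hball⟩ := exists_isPath_mul_prod hS l hl h
  by_contra! hfar
  have hαfar : ∀ p ∈ α, ∀ z ∈ Subgroup.zpowers g, d ≤ wdist S p z := fun p hp z hz => by
    linarith [hfar z hz, wdist_triangle hS h p z, hball p hp]
  linarith [hdiv.2 h _ hθ d hd α hα hαfar]

theorem IsFDivergent.isWPD {S : Finset G} (hS : Subgroup.closure (S : Set G) = ⊤)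
    (hiso : IsIsometricAction G X) {f : ℝ → ℝ} (hf : Tendsto f atTop atTop) {g : G}
    (hg : IsFDivergent S x0 f g) : IsWPD (X := X) g := by
  intro κ _ x
  obtain ⟨hlox, θ, π, hdiv⟩ := hg
  obtain ⟨M, hM, hMlip⟩ := hiso.exists_dist_smul_le_mul_wdist hS x0
  set κ₁ := κ + 2 * dist x x0
  obtain ⟨N, hN⟩ := hlox.exists_pow_dist_ge (M * θ + 4 * κ₁)
  obtain ⟨l, hl, hprod⟩ := exists_list_prod_eq hS (g ^ N)
  obtain ⟨d, hfd, hd⟩ := ((hf.eventually_gt_atTop (l.length : ℝ)).and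
    (eventually_gt_atTop 0)).exists
  refine ⟨N, (hlox.finite_setOf_wdist_zpow_le hS (κ₁ + M * (l.length + d))
    (l.length + d)).subset ?_⟩
  rintro h ⟨hx, hNx⟩
  have h1 : dist x0 (h • x0) < κ₁ := by
    linarith [hiso.dist_smul_le h x x0]
  have h2 : dist (g ^ N • x0) ((h * g ^ N) • x0) < κ₁ := by
    have := hiso.dist_smul_le h (g ^ N • x) (g ^ N • x0)
    rw [hiso] at this
    rw [mul_smul]
    linarith
  have hθ : θ ≤ wdist S (π h) (π (h * g ^ N)) := by
    have hstart := hdiv.1.dist_le_two_mul (one_mem _) h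
    have hend := hdiv.1.dist_le_two_mul (pow_mem (Subgroup.mem_zpowers g) N) (h * g ^ N)
    have hlip := hMlip (π h) (π (h * g ^ N))
    have htri := dist_triangle4 x0 (π h • x0) (π (h * g ^ N) • x0) (g ^ N • x0)
    rw [one_smul] at hstart
    rw [dist_comm (π (h * g ^ N) • x0)] at htri
    have hMθ : M * θ ≤ M * wdist S (π h) (π (h * g ^ N)) := by linarith
    exact le_of_mul_le_mul_left hMθ hM
  obtain ⟨z, hz, hhz⟩ := hdiv.exists_wdist_zpowers_lt hS hl (hprod ▸ hθ) hd hfd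
  obtain ⟨k, rfl⟩ := Subgroup.mem_zpowers_iff.mp hz
  refine ⟨k, ?_, by rw [wdist_comm hS]; exact hhz.le⟩
  have hlip := (hMlip h (g ^ k)).trans (mul_le_mul_of_nonneg_left hhz.le hM.le)
  linarith [dist_triangle x0 (h • x0) (g ^ k • x0)]

theorem fdivergent_is_loxodromic_wpd_general
    {G : Type*} [Group G] (S : Finset G) (hS : Subgroup.closure (S : Set G) = ⊤)
    {X : Type*} [MetricSpace X] [MulAction G X] (x0 : X)
    (hiso : IsIsometricAction G X)
    (f : ℝ → ℝ) (hf : DivergingFun f) (g₀ : G) (hg₀ : IsFDivergent S x0 f g₀) :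
    IsLoxodromic g₀ x0 ∧ IsWPD (X := X) g₀ :=
  ⟨hg₀.1, hg₀.isWPD hS hiso hf.tendsto_atTop⟩

/-- an `f`-divergent element is loxodromic and WPD. -/
theorem fdivergent_is_loxodromic_wpd
    {G : Type*} [Group G] (S : Finset G) (hS : Subgroup.closure (S : Set G) = ⊤)
    {X : Type*} [MetricSpace X] [MulAction G X] (x0 : X)
    (hiso : IsIsometricAction G X) (hgeo : IsGeodesicSpace X) (hhyp : IsHypSpace X)
    (hne : NonElementaryAction G x0)
    (f : ℝ → ℝ) (hf : DivergingFun f) (g₀ : G) (hg₀ : IsFDivergent S x0 f g₀) :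
    IsLoxodromic g₀ x0 ∧ IsWPD (X := X) g₀ :=
  fdivergent_is_loxodromic_wpd_general S hS x0 hiso f hf g₀ hg₀

end RandomDivergence
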